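/- Let P be a lattice polygon and v a lattice point in the interior of P. Then either (i) v = (v₁+v₂)/2 for two distinct lattice points v₁, v₂ ∈ P, or (ii) v = (v₁+v₂+v₃)/3 for three pairwise distinct lattice points v₁, v₂, v₃ ∈ P. -/

import Mathlib

open Finset

noncomputable def coeR (x : Fin 2 → ℤ) : Fin 2 → ℝ := fun i => (x i : ℝ)

/-!
By Carathéodory's theorem, an interior lattice point `v` of `P`, which is not an extreme point of
`P`, lies in a segment or in a nondegenerate triangle spanned by lattice points of `P` other than
`v`. On a segment, `v ± w` stay in the segment for the primitive lattice vector `w` along it.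
In a lattice triangle `a b c` we induct on twice its area `D = orient a b c`, and use the
barycentric coordinates `orient v b c`, `orient a v c`, `orient a b v` of `v`, integers summing
to `D`. If one of them vanishes, `v` lies on an edge. If one of them is at least `2`, say the
first, then the triangle `v b c` has a lattice point `q` besides its vertices, and `v` lies in
`a q c` or in `a b q`, of smaller area. Otherwise all three are `1`, so `D = 3` and `v` is the
centroid of `a`, `b`, `c`.
-/

section Orient

variable {R : Type*} [CommRing R]

/-- Twice the signed area of the triangle `a b c`. For `x` in the plane, `orient x b c`,
`orient a x c` and `orient a b x` are its barycentric coordinates scaled by `orient a b c`. -/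
def orient (a b c : Fin 2 → R) : R :=
  (b 0 - a 0) * (c 1 - a 1) - (b 1 - a 1) * (c 0 - a 0)

lemma orient_rotate (a b c : Fin 2 → R) : orient b c a = orient a b c := by
  unfold orient; ring

lemma orient_swap (a b c : Fin 2 → R) : orient a c b = -orient a b c := by
  unfold orient; ring

@[simp] lemma orient_self_left (a c : Fin 2 → R) : orient a a c = 0 := by
  unfold orient; ring

@[simp] lemma orient_self_right (a b : Fin 2 → R) : orient a b b = 0 := by
  unfold orient; ring

@[simp] lemma orient_self_mid (a b : Fin 2 → R) : orient a b a = 0 := by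
  unfold orient; ring

lemma orient_add_orient_add_orient (a b c x : Fin 2 → R) :
    orient x b c + orient a x c + orient a b x = orient a b c := by
  unfold orient; ring

lemma orient_smul_eq (a b c x : Fin 2 → R) :
    orient a b c • x = orient x b c • a + orient a x c • b + orient a b x • c := by
  ext i; fin_cases i <;> simp [orient] <;> ring

lemma orient_smul_add_smul_left {s t : R} (hst : s + t = 1) (x y b c : Fin 2 → R) :
    orient (s • x + t • y) b c = s * orient x b c + t * orient y b c := by
  simp only [orient, Pi.add_apply, Pi.smul_apply, smul_eq_mul]
  linear_combination (b 1 * c 0 - b 0 * c 1) * hst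

end Orient

section Field

variable {𝕜 : Type*} [Field 𝕜] {A B C X : Fin 2 → 𝕜}

lemma eq_orient_div_smul_add (h : orient A B C ≠ 0) :
    X = (orient X B C / orient A B C) • A + (orient A X C / orient A B C) • B +
      (orient A B X / orient A B C) • C := by
  apply smul_right_injective _ h
  simp only [smul_add, smul_smul, mul_div_cancel₀ _ h]
  exact orient_smul_eq A B C X

lemma collinear_of_orient_eq_zero (hAB : A ≠ B) (h : orient A B C = 0) :
    Collinear 𝕜 {A, B, C} := by
  rw [Set.pair_comm, Set.insert_comm]
  refine collinear_insert_of_mem_affineSpan_pair (mem_affineSpan_pair_iff_exists_lineMap_eq.2 ?_)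
  simp only [orient] at h
  by_cases h0 : B 0 - A 0 = 0
  · have h1 : B 1 - A 1 ≠ 0 := fun h1 =>
      hAB (funext fun i => by fin_cases i <;> simp [sub_eq_zero.1 h0, sub_eq_zero.1 h1])
    refine ⟨(C 1 - A 1) / (B 1 - A 1), funext fun i => ?_⟩
    fin_cases i <;> simp [AffineMap.lineMap_apply_module] <;> field_simp
    · linear_combination h
    · ring
  · refine ⟨(C 0 - A 0) / (B 0 - A 0), funext fun i => ?_⟩
    fin_cases i <;> simp [AffineMap.lineMap_apply_module] <;> field_simp
    · ring
    · linear_combination -h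

variable [LinearOrder 𝕜] [IsStrictOrderedRing 𝕜]

lemma convex_setOf_orient_nonneg (B C : Fin 2 → 𝕜) : Convex 𝕜 {X | 0 ≤ orient X B C} := by
  intro x hx y hy s t hs ht hst
  simp only [Set.mem_ofPred_eq, orient_smul_add_smul_left hst] at *
  positivity

theorem mem_convexHull_triple_iff (h : 0 < orient A B C) :
    X ∈ convexHull 𝕜 {A, B, C} ↔ 0 ≤ orient X B C ∧ 0 ≤ orient A X C ∧ 0 ≤ orient A B X := by
  constructor
  · intro hX
    have hsub : convexHull 𝕜 {A, B, C} ⊆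
        {X | 0 ≤ orient X B C} ∩ {X | 0 ≤ orient X C A} ∩ {X | 0 ≤ orient X A B} := by
      refine convexHull_min ?_ (((convex_setOf_orient_nonneg B C).inter
        (convex_setOf_orient_nonneg C A)).inter (convex_setOf_orient_nonneg A B))
      simp [Set.insert_subset_iff, orient_rotate, h.le]
    obtain ⟨⟨h1, h2⟩, h3⟩ := hsub hX
    exact ⟨h1, by rwa [← orient_rotate], by rwa [orient_rotate]⟩
  · rintro ⟨h1, h2, h3⟩
    have hw := orient_add_orient_add_orient A B C X
    have := (convex_convexHull 𝕜 {A, B, C}).sum_mem (t := univ)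
      (w := ![orient X B C / orient A B C, orient A X C / orient A B C,
        orient A B X / orient A B C])
      (z := ![A, B, C]) (fun i _ => by fin_cases i <;> simp <;> positivity)
      (by simp [Fin.sum_univ_three]; field_simp; linear_combination hw)
      (fun i _ => subset_convexHull 𝕜 _ (by fin_cases i <;> simp))
    rw [eq_orient_div_smul_add (X := X) h.ne']
    simpa [Fin.sum_univ_three, add_assoc] using this

lemma mem_segment_of_orient_eq_zero (h : 0 < orient A B C) (hy : 0 ≤ orient A X C)
    (hz : 0 ≤ orient A B X) (hx : orient X B C = 0) : X ∈ segment 𝕜 B C := by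
  have hw := orient_add_orient_add_orient A B C X
  refine ⟨orient A X C / orient A B C, orient A B X / orient A B C, by positivity, by positivity,
    by field_simp; linear_combination hw - hx, ?_⟩
  conv_rhs => rw [eq_orient_div_smul_add (X := X) h.ne', hx]
  simp

end Field

section Extreme

variable {𝕜 E : Type*} [Field 𝕜] [LinearOrder 𝕜] [IsStrictOrderedRing 𝕜] [AddCommGroup E]
  [Module 𝕜 E] {t : Set E} {x : E}

theorem mem_extremePoints_convexHull_insert (hx : x ∉ convexHull 𝕜 t) :
    x ∈ (convexHull 𝕜 (insert x t)).extremePoints 𝕜 := by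
  rcases t.eq_empty_or_nonempty with rfl | ht
  · simp
  rw [convexHull_insert ht, convexJoin_singleton_left, mem_extremePoints_iff_left]
  refine ⟨Set.mem_iUnion₂.2 ⟨_, ht.convexHull.some_mem, left_mem_segment 𝕜 _ _⟩, ?_⟩
  simp only [Set.mem_iUnion₂]
  rintro _ ⟨c₁, hc₁, a₁, a, ha₁, ha, haa, rfl⟩ _ ⟨c₂, hc₂, b₁, b, hb₁, hb, hbb, rfl⟩
    ⟨p, q, hp, hq, hpq, hxyz⟩
  obtain rfl : a₁ = 1 - a := by linarith
  obtain rfl : b₁ = 1 - b := by linarith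
  rcases ha.eq_or_lt with rfl | ha
  · simp
  -- otherwise `x` is a convex combination of `c₁, c₂ ∈ convexHull t`
  refine absurd ?_ hx
  have hpos : 0 < p * a + q * b := by positivity
  have hcomb : (p * a + q * b) • x = (p * a) • c₁ + (q * b) • c₂ := by
    rw [← sub_eq_zero]
    linear_combination (norm := module) -hxyz + hpq • x
  have := convex_convexHull 𝕜 t hc₁ hc₂ (div_nonneg (mul_nonneg hp.le ha.le) hpos.le)
    (div_nonneg (mul_nonneg hq.le hb) hpos.le) (by field_simp)
  convert this using 1
  apply smul_right_injective E hpos.ne'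
  simp only [smul_add, smul_smul, mul_div_cancel₀ _ hpos.ne', hcomb]

end Extreme

theorem mem_convexHull_sdiff_singleton_of_mem_interior {E : Type*} [AddCommGroup E] [Module ℝ E]
    [TopologicalSpace E] [IsTopologicalAddGroup E] [ContinuousSMul ℝ E] [Nontrivial E] {s : Set E}
    {x : E} (hx : x ∈ interior (convexHull ℝ s)) : x ∈ convexHull ℝ (s \ {x}) := by
  by_contra h
  have hx' : x ∈ interior (convexHull ℝ (insert x (s \ {x}))) :=
    interior_mono (convexHull_mono (by simp)) hx
  exact Set.disjoint_left.1 (disjoint_interior_extremePoints _) hx'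
    (mem_extremePoints_convexHull_insert h)

lemma coeR_injective : Function.Injective coeR := fun x y h =>
  funext fun i => by simpa [coeR] using congrFun h i

@[simp] lemma coeR_zero : coeR 0 = 0 := by
  ext i; simp [coeR]

@[simp] lemma coeR_add (x y : Fin 2 → ℤ) : coeR (x + y) = coeR x + coeR y := by
  ext i; simp [coeR]

@[simp] lemma coeR_sub (x y : Fin 2 → ℤ) : coeR (x - y) = coeR x - coeR y := by
  ext i; simp [coeR]

@[simp] lemma coeR_smul (n : ℤ) (x : Fin 2 → ℤ) : coeR (n • x) = (n : ℝ) • coeR x := by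
  ext i; simp [coeR]

@[simp] lemma orient_coeR (a b c : Fin 2 → ℤ) :
    orient (coeR a) (coeR b) (coeR c) = orient a b c := by
  simp [orient, coeR]

def triangle (a b c : Fin 2 → ℤ) : Set (Fin 2 → ℝ) := convexHull ℝ {coeR a, coeR b, coeR c}

lemma triangle_rotate (a b c : Fin 2 → ℤ) : triangle b c a = triangle a b c := by
  rw [triangle, triangle, Set.pair_comm, Set.insert_comm]

lemma triangle_swap (a b c : Fin 2 → ℤ) : triangle a c b = triangle a b c := by
  rw [triangle, triangle, Set.pair_comm]

lemma triangle_subset {a b c : Fin 2 → ℤ} {S : Set (Fin 2 → ℝ)} (hS : Convex ℝ S)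
    (ha : coeR a ∈ S) (hb : coeR b ∈ S) (hc : coeR c ∈ S) : triangle a b c ⊆ S :=
  convexHull_min (by simp [Set.insert_subset_iff, ha, hb, hc]) hS

lemma left_mem_triangle (a b c : Fin 2 → ℤ) : coeR a ∈ triangle a b c :=
  subset_convexHull ℝ _ (by simp)

lemma middle_mem_triangle (a b c : Fin 2 → ℤ) : coeR b ∈ triangle a b c :=
  subset_convexHull ℝ _ (by simp)

lemma right_mem_triangle (a b c : Fin 2 → ℤ) : coeR c ∈ triangle a b c :=
  subset_convexHull ℝ _ (by simp)

lemma mem_triangle_iff {a b c x : Fin 2 → ℤ} (h : 0 < orient a b c) :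
    coeR x ∈ triangle a b c ↔ 0 ≤ orient x b c ∧ 0 ≤ orient a x c ∧ 0 ≤ orient a b x := by
  rw [triangle, mem_convexHull_triple_iff (by simpa using h)]
  simp only [orient_coeR]
  norm_cast

def IsMidpointOrCentroid (S : Set (Fin 2 → ℝ)) (v : Fin 2 → ℤ) : Prop :=
  (∃ v₁ v₂ : Fin 2 → ℤ, coeR v₁ ∈ S ∧ coeR v₂ ∈ S ∧ v₁ ≠ v₂ ∧
      coeR v = (2⁻¹ : ℝ) • (coeR v₁ + coeR v₂)) ∨
  (∃ v₁ v₂ v₃ : Fin 2 → ℤ, coeR v₁ ∈ S ∧ coeR v₂ ∈ S ∧ coeR v₃ ∈ S ∧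
      v₁ ≠ v₂ ∧ v₁ ≠ v₃ ∧ v₂ ≠ v₃ ∧ coeR v = (3⁻¹ : ℝ) • (coeR v₁ + coeR v₂ + coeR v₃))

namespace IsMidpointOrCentroid

variable {S T : Set (Fin 2 → ℝ)} {v : Fin 2 → ℤ}

lemma mono (h : IsMidpointOrCentroid S v) (hST : S ⊆ T) : IsMidpointOrCentroid T v := by
  rcases h with ⟨v₁, v₂, h₁, h₂, h⟩ | ⟨v₁, v₂, v₃, h₁, h₂, h₃, h⟩
  exacts [.inl ⟨v₁, v₂, hST h₁, hST h₂, h⟩, .inr ⟨v₁, v₂, v₃, hST h₁, hST h₂, hST h₃, h⟩]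

lemma of_add_sub {w : Fin 2 → ℤ} (hw : w ≠ 0) (h₁ : coeR (v + w) ∈ S) (h₂ : coeR (v - w) ∈ S) :
    IsMidpointOrCentroid S v := by
  refine .inl ⟨v + w, v - w, h₁, h₂, fun h => hw (funext fun i => ?_), ?_⟩
  · have := congrFun h i
    simp only [Pi.add_apply, Pi.sub_apply] at this
    simp only [Pi.zero_apply]
    omega
  · simp only [coeR_add, coeR_sub]; module

lemma of_add_add_eq_smul {v₁ v₂ v₃ : Fin 2 → ℤ} (h₁ : coeR v₁ ∈ S) (h₂ : coeR v₂ ∈ S)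
    (h₃ : coeR v₃ ∈ S) (h₁₂ : v₁ ≠ v₂) (h₁₃ : v₁ ≠ v₃) (h₂₃ : v₂ ≠ v₃)
    (h : v₁ + v₂ + v₃ = (3 : ℤ) • v) : IsMidpointOrCentroid S v := by
  refine .inr ⟨v₁, v₂, v₃, h₁, h₂, h₃, h₁₂, h₁₃, h₂₃, ?_⟩
  rw [← coeR_add, ← coeR_add, h, coeR_smul]
  module

end IsMidpointOrCentroid

lemma exists_eq_smul_of_orient_eq_zero {v x y : Fin 2 → ℤ} (hx : x ≠ v) (h : orient v x y = 0) :
    ∃ w : Fin 2 → ℤ, ∃ m n : ℤ, 0 < m ∧ x - v = m • w ∧ y - v = n • w := by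
  set g : ℤ := ((Int.gcd (x 0 - v 0) (x 1 - v 1) : ℕ) : ℤ)
  set α := Int.gcdA (x 0 - v 0) (x 1 - v 1)
  set β := Int.gcdB (x 0 - v 0) (x 1 - v 1)
  have hbez : g = (x 0 - v 0) * α + (x 1 - v 1) * β := Int.gcd_eq_gcd_ab _ _
  have hg : 0 < g := by
    refine Int.natCast_pos.2 (Int.gcd_pos_iff.2 ?_)
    by_contra! h0
    exact hx (funext fun i => by fin_cases i <;> simp <;> omega)
  obtain ⟨k₀, hk₀⟩ : g ∣ x 0 - v 0 := Int.gcd_dvd_left ..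
  obtain ⟨k₁, hk₁⟩ : g ∣ x 1 - v 1 := Int.gcd_dvd_right ..
  simp only [orient] at h
  -- by Bézout, `y - v` is an integer multiple of the primitive vector `(x - v) / g`
  refine ⟨![k₀, k₁], g, α * (y 0 - v 0) + β * (y 1 - v 1), hg, funext fun i => ?_,
    funext fun i => ?_⟩
  · fin_cases i <;> simp [hk₀, hk₁]
  · fin_cases i <;> simp <;> refine mul_left_cancel₀ hg.ne' ?_
    · linear_combination (y 0 - v 0) * hbez - β * h + (α * (y 0 - v 0) + β * (y 1 - v 1)) * hk₀
    · linear_combination (y 1 - v 1) * hbez + α * h + (α * (y 0 - v 0) + β * (y 1 - v 1)) * hk₁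

theorem exists_add_sub_mem_segment {x y v : Fin 2 → ℤ}
    (hv : coeR v ∈ segment ℝ (coeR x) (coeR y)) (hvx : v ≠ x) (hvy : v ≠ y) :
    ∃ w ≠ 0, coeR (v + w) ∈ segment ℝ (coeR x) (coeR y) ∧
      coeR (v - w) ∈ segment ℝ (coeR x) (coeR y) := by
  obtain ⟨s, t, hs, ht, hst, hv'⟩ := id hv
  have horient : orient v x y = 0 := by
    have : orient (coeR v) (coeR x) (coeR y) = 0 := by
      rw [← hv', orient_smul_add_smul_left hst]; simp
    exact_mod_cast (orient_coeR v x y).symm.trans this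
  obtain ⟨w, m, n, hm, hxw, hyw⟩ := exists_eq_smul_of_orient_eq_zero hvx.symm horient
  have hw : w ≠ 0 := by rintro rfl; exact hvx (sub_eq_zero.1 (by simpa using hxw)).symm
  have hs : 0 < s := hs.lt_of_ne fun h =>
    hvy (coeR_injective (by simp [← hv', ← h, (by linarith : t = 1)]))
  have ht : 0 < t := ht.lt_of_ne fun h =>
    hvx (coeR_injective (by simp [← hv', ← h, (by linarith : s = 1)]))
  have hmn : s * m + t * n = 0 := by
    have : (s * m + t * n) • coeR w = 0 := by
      have hx' := congrArg coeR hxw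
      have hy' := congrArg coeR hyw
      simp only [coeR_sub, coeR_smul] at hx' hy'
      rw [add_smul, mul_smul, mul_smul, ← hx', ← hy']
      linear_combination (norm := module) hv' - hst • coeR v
    exact (smul_eq_zero.1 this).resolve_right fun h => hw (coeR_injective (by simpa using h))
  have hm' : (1 : ℝ) ≤ m := by exact_mod_cast hm
  have hn : (n : ℝ) ≤ -1 := by
    have : (n : ℝ) < 0 := by nlinarith
    have : n < 0 := by exact_mod_cast this
    exact_mod_cast (by omega : n ≤ -1)
  refine ⟨w, hw, ?_, ?_⟩
  · have := (convex_segment (coeR x) (coeR y)).add_smul_sub_mem hv (left_mem_segment ℝ _ _)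
      (t := (m : ℝ)⁻¹) ⟨by positivity, inv_le_one_of_one_le₀ hm'⟩
    rwa [← coeR_sub, hxw, coeR_smul, smul_smul, inv_mul_cancel₀ (by positivity), one_smul,
      ← coeR_add] at this
  · have := (convex_segment (coeR x) (coeR y)).add_smul_sub_mem hv (right_mem_segment ℝ _ _)
      (t := (-n : ℝ)⁻¹) ⟨inv_nonneg.2 (by linarith), inv_le_one_of_one_le₀ (by linarith)⟩
    rwa [← coeR_sub, hyw, coeR_smul, smul_smul, ← neg_inv, neg_mul,
      inv_mul_cancel₀ (by linarith : (n : ℝ) < 0).ne, neg_smul, one_smul, ← sub_eq_add_neg,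
      ← coeR_sub] at this

lemma exists_not_dvd_orient {a b c : Fin 2 → ℤ} (hD : 2 ≤ orient a b c) :
    ∃ x, ¬(orient a b c ∣ orient a x c ∧ orient a b c ∣ orient a b x) := by
  by_contra! h
  have h₁ := (h ![a 0 + 1, a 1]).1
  have h₂ := (h ![a 0 + 1, a 1]).2
  have h₃ := (h ![a 0, a 1 + 1]).1
  have h₄ := (h ![a 0, a 1 + 1]).2
  simp [orient] at h₁ h₂ h₃ h₄ hD
  -- `orient a b c` divides all coordinates of `b - a` and `c - a`, so its square divides it
  have := Int.le_of_dvd (by linarith) (dvd_sub (mul_dvd_mul h₄ h₁) (mul_dvd_mul h₂ h₃))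
  nlinarith

theorem exists_mem_triangle_ne_vertices {a b c : Fin 2 → ℤ} (hD : 2 ≤ orient a b c) :
    ∃ q, coeR q ∈ triangle a b c ∧ q ≠ a ∧ q ≠ b ∧ q ≠ c := by
  have key : ∀ q, 0 ≤ orient a q c → 0 ≤ orient a b q → orient a q c < orient a b c →
      orient a b q < orient a b c → 0 < orient a q c + orient a b q →
      orient a q c + orient a b q ≤ orient a b c →
      ∃ q, coeR q ∈ triangle a b c ∧ q ≠ a ∧ q ≠ b ∧ q ≠ c := by
    intro q h₁ h₂ h₃ h₄ h₅ h₆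
    refine ⟨q, (mem_triangle_iff (by omega)).2 ⟨?_, h₁, h₂⟩, ?_, ?_, ?_⟩
    · linarith [orient_add_orient_add_orient a b c q]
    · rintro rfl; simp at h₅
    · rintro rfl; exact lt_irrefl _ h₃
    · rintro rfl; exact lt_irrefl _ h₄
  obtain ⟨x, hx⟩ := exists_not_dvd_orient hD
  -- reduce `x` modulo the lattice spanned by the edges `b - a` and `c - a`
  set y := x - (orient a x c / orient a b c) • (b - a) - (orient a b x / orient a b c) • (c - a)
  have hy₁ : orient a y c = orient a x c % orient a b c := by
    rw [Int.emod_def]; simp only [y, orient, Pi.sub_apply, Pi.smul_apply, smul_eq_mul]; ring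
  have hy₂ : orient a b y = orient a b x % orient a b c := by
    rw [Int.emod_def]; simp only [y, orient, Pi.sub_apply, Pi.smul_apply, smul_eq_mul]; ring
  have hs := Int.emod_nonneg (orient a x c) (by omega : orient a b c ≠ 0)
  have ht := Int.emod_nonneg (orient a b x) (by omega : orient a b c ≠ 0)
  have hs' := Int.emod_lt_of_pos (orient a x c) (by omega : 0 < orient a b c)
  have ht' := Int.emod_lt_of_pos (orient a b x) (by omega : 0 < orient a b c)
  have hst : 0 < orient a x c % orient a b c + orient a b x % orient a b c := by
    by_contra! h
    exact hx ⟨Int.dvd_of_emod_eq_zero (by omega), Int.dvd_of_emod_eq_zero (by omega)⟩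
  rcases le_or_gt (orient a x c % orient a b c + orient a b x % orient a b c) (orient a b c)
    with h | h
  · exact key y (by omega) (by omega) (by omega) (by omega) (by omega) (by omega)
  · -- otherwise the reflection of `y` in the midpoint of `b c` lies in the triangle
    have hz₁ : orient a (b + c - y) c = orient a b c - orient a x c % orient a b c := by
      rw [← hy₁]; simp only [orient, Pi.sub_apply, Pi.add_apply]; ring
    have hz₂ : orient a b (b + c - y) = orient a b c - orient a b x % orient a b c := by
      rw [← hy₂]; simp only [orient, Pi.sub_apply, Pi.add_apply]; ring
    exact key (b + c - y) (by omega) (by omega) (by omega) (by omega) (by omega) (by omega)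

lemma eq_of_orient_eq_zero {a b c x : Fin 2 → ℤ} (hD : orient a b c ≠ 0)
    (hb : orient a x c = 0) (hc : orient a b x = 0) : x = a := by
  have hsum := orient_add_orient_add_orient a b c x
  have h := orient_smul_eq a b c x
  rw [hb, hc, add_zero, add_zero] at hsum
  rw [hb, hc, hsum, zero_smul, zero_smul, add_zero, add_zero] at h
  exact smul_right_injective _ hD h

theorem exists_smaller_triangle_of_two_le {a b c v : Fin 2 → ℤ} (hx : 2 ≤ orient v b c)
    (hy : 0 < orient a v c) (hz : 0 < orient a b v) :
    ∃ a' b' c', 0 < orient a' b' c' ∧ orient a' b' c' < orient a b c ∧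
      triangle a' b' c' ⊆ triangle a b c ∧ coeR v ∈ triangle a' b' c' ∧
      v ≠ a' ∧ v ≠ b' ∧ v ≠ c' := by
  have hD : 0 < orient a b c := by linarith [orient_add_orient_add_orient a b c v]
  have hva : v ≠ a := by rintro rfl; simp at hy
  have hvc : v ≠ c := by rintro rfl; simp at hy
  have hvT : coeR v ∈ triangle a b c := (mem_triangle_iff hD).2 ⟨by omega, hy.le, hz.le⟩
  obtain ⟨q, hq, hqv, hqb, hqc⟩ := exists_mem_triangle_ne_vertices hx
  obtain ⟨-, hq₂, hq₃⟩ := (mem_triangle_iff (by omega)).1 hq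
  have hqT : coeR q ∈ triangle a b c := triangle_subset (convex_convexHull ℝ _) hvT
    (middle_mem_triangle a b c) (right_mem_triangle a b c) hq
  obtain ⟨hqT₁, hqT₂, hqT₃⟩ := (mem_triangle_iff hD).1 hqT
  have hqsum := orient_add_orient_add_orient a b c q
  -- `v` lies on one side of the line `a q`
  rcases le_total 0 (orient a q v) with h | h
  · have hpos : 0 < orient a q c := by linarith [orient_add_orient_add_orient a q c v]
    refine ⟨a, q, c, hpos, ?_, triangle_subset (convex_convexHull ℝ _) (left_mem_triangle a b c)
      hqT (right_mem_triangle a b c), (mem_triangle_iff hpos).2 ⟨hq₂, hy.le, h⟩, hva, hqv.symm,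
      hvc⟩
    by_contra! hle
    refine hqb (eq_of_orient_eq_zero (a := b) (b := c) (c := a) (by rw [orient_rotate]; omega)
      ?_ ?_) <;> rw [orient_rotate] <;> omega
  · have hpos : 0 < orient a b q := by
      linarith [orient_add_orient_add_orient a b q v, orient_swap a q v]
    refine ⟨a, b, q, hpos, ?_, triangle_subset (convex_convexHull ℝ _) (left_mem_triangle a b c)
      (middle_mem_triangle a b c) hqT, (mem_triangle_iff hpos).2 ⟨hq₃, ?_, hz.le⟩, hva, ?_,
      hqv.symm⟩
    · by_contra! hle
      refine hqc (eq_of_orient_eq_zero (a := c) (b := a) (c := b)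
        (by rw [orient_rotate, orient_rotate]; omega) ?_ ?_) <;>
        rw [orient_rotate, orient_rotate] <;> omega
    · linarith [orient_swap a q v]
    · rintro rfl; simp at hx

theorem exists_smaller_triangle {a b c v : Fin 2 → ℤ} (hx : 0 < orient v b c)
    (hy : 0 < orient a v c) (hz : 0 < orient a b v)
    (h : 2 ≤ orient v b c ∨ 2 ≤ orient a v c ∨ 2 ≤ orient a b v) :
    ∃ a' b' c', 0 < orient a' b' c' ∧ orient a' b' c' < orient a b c ∧
      triangle a' b' c' ⊆ triangle a b c ∧ coeR v ∈ triangle a' b' c' ∧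
      v ≠ a' ∧ v ≠ b' ∧ v ≠ c' := by
  rcases h with h | h | h
  · exact exists_smaller_triangle_of_two_le h hy hz
  · have := exists_smaller_triangle_of_two_le (a := b) (b := c) (c := a) (v := v)
      (by rwa [orient_rotate]) (by rwa [orient_rotate]) (by rwa [orient_rotate])
    rwa [orient_rotate, triangle_rotate] at this
  · have := exists_smaller_triangle_of_two_le (a := c) (b := a) (c := b) (v := v)
      (by rwa [orient_rotate, orient_rotate]) (by rwa [orient_rotate, orient_rotate])
      (by rwa [orient_rotate, orient_rotate])
    rwa [orient_rotate, orient_rotate, triangle_rotate, triangle_rotate] at this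

theorem isMidpointOrCentroid_of_orient_eq_zero {a b c v : Fin 2 → ℤ} (hD : 0 < orient a b c)
    (hv : coeR v ∈ triangle a b c) (hx : orient v b c = 0) (hvb : v ≠ b) (hvc : v ≠ c) :
    IsMidpointOrCentroid (triangle a b c) v := by
  obtain ⟨-, hy, hz⟩ := (mem_triangle_iff hD).1 hv
  have hseg : coeR v ∈ segment ℝ (coeR b) (coeR c) :=
    mem_segment_of_orient_eq_zero (A := coeR a) (by simpa) (by simpa) (by simpa) (by simpa)
  obtain ⟨w, hw, h₁, h₂⟩ := exists_add_sub_mem_segment hseg hvb hvc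
  exact (IsMidpointOrCentroid.of_add_sub hw h₁ h₂).mono
    (segment_subset_convexHull (by simp) (by simp))

theorem isMidpointOrCentroid_of_orient_eq_one {a b c v : Fin 2 → ℤ} (hx : orient v b c = 1)
    (hy : orient a v c = 1) (hz : orient a b v = 1) : IsMidpointOrCentroid (triangle a b c) v := by
  have hD : orient a b c = 3 := by linarith [orient_add_orient_add_orient a b c v]
  have h := orient_smul_eq a b c v
  rw [hx, hy, hz, hD] at h
  refine .of_add_add_eq_smul (left_mem_triangle a b c) (middle_mem_triangle a b c)
    (right_mem_triangle a b c) ?_ ?_ ?_ (by simpa using h.symm)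
  all_goals rintro rfl; simp at hD

theorem isMidpointOrCentroid_triangle {a b c v : Fin 2 → ℤ} (hD : 0 < orient a b c)
    (hv : coeR v ∈ triangle a b c) (hva : v ≠ a) (hvb : v ≠ b) (hvc : v ≠ c) :
    IsMidpointOrCentroid (triangle a b c) v := by
  induction hn : (orient a b c).toNat using Nat.strong_induction_on generalizing a b c with
  | _ n ih =>
  obtain ⟨hx, hy, hz⟩ := (mem_triangle_iff hD).1 hv
  rcases hx.eq_or_lt with hx | hx
  · exact isMidpointOrCentroid_of_orient_eq_zero hD hv hx.symm hvb hvc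
  rcases hy.eq_or_lt with hy | hy
  · rw [← triangle_rotate] at hv ⊢
    exact isMidpointOrCentroid_of_orient_eq_zero (by rwa [orient_rotate]) hv
      (by rw [orient_rotate]; exact hy.symm) hvc hva
  rcases hz.eq_or_lt with hz | hz
  · rw [← triangle_rotate, ← triangle_rotate] at hv ⊢
    exact isMidpointOrCentroid_of_orient_eq_zero (by rwa [orient_rotate, orient_rotate]) hv
      (by rw [orient_rotate, orient_rotate]; exact hz.symm) hva hvb
  by_cases hone : orient v b c = 1 ∧ orient a v c = 1 ∧ orient a b v = 1
  · exact isMidpointOrCentroid_of_orient_eq_one hone.1 hone.2.1 hone.2.2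
  obtain ⟨a', b', c', hpos, hlt, hsub, hv', ha', hb', hc'⟩ :=
    exists_smaller_triangle hx hy hz (by omega)
  exact (ih _ (by omega) hpos hv' ha' hb' hc' rfl).mono hsub

theorem isMidpointOrCentroid_triangle_of_orient_ne_zero {a b c v : Fin 2 → ℤ}
    (hD : orient a b c ≠ 0) (hv : coeR v ∈ triangle a b c) (hva : v ≠ a) (hvb : v ≠ b)
    (hvc : v ≠ c) : IsMidpointOrCentroid (triangle a b c) v := by
  rcases hD.lt_or_gt with hD | hD
  · rw [← triangle_swap] at hv ⊢
    exact isMidpointOrCentroid_triangle (by rw [orient_swap]; omega) hv hva hvc hvb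
  · exact isMidpointOrCentroid_triangle hD hv hva hvb hvc

theorem isMidpointOrCentroid_of_affineIndependent {t : Finset (Fin 2 → ℝ)} {v : Fin 2 → ℤ}
    (ht : AffineIndependent ℝ ((↑) : t → Fin 2 → ℝ)) (hlat : ↑t ⊆ Set.range coeR)
    (hv : coeR v ∈ convexHull ℝ ↑t) (hvt : coeR v ∉ t) :
    IsMidpointOrCentroid (convexHull ℝ ↑t) v := by
  have hcard : t.card ≤ 3 := by
    have h₁ := ht.card_le_finrank_succ
    have h₂ := (vectorSpan ℝ (Set.range ((↑) : t → Fin 2 → ℝ))).finrank_le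
    rw [Fintype.card_coe] at h₁
    rw [Module.finrank_fin_fun] at h₂
    omega
  interval_cases h : t.card
  · simp [Finset.card_eq_zero.1 h] at hv
  · obtain ⟨A, rfl⟩ := Finset.card_eq_one.1 h
    rw [Finset.coe_singleton, convexHull_singleton] at hv
    exact absurd (Finset.mem_singleton.2 hv) hvt
  · obtain ⟨A, B, -, rfl⟩ := Finset.card_eq_two.1 h
    obtain ⟨x, rfl⟩ := hlat (by simp : A ∈ ↑({A, B} : Finset _))
    obtain ⟨y, rfl⟩ := hlat (by simp : B ∈ ↑({coeR x, B} : Finset _))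
    simp only [Finset.coe_pair, convexHull_pair, Finset.mem_insert, Finset.mem_singleton,
      not_or] at hv hvt ⊢
    obtain ⟨w, hw, h₁, h₂⟩ := exists_add_sub_mem_segment hv (fun h => hvt.1 (by rw [h]))
      (fun h => hvt.2 (by rw [h]))
    exact .of_add_sub hw h₁ h₂
  · obtain ⟨A, B, C, hAB, -, -, rfl⟩ := Finset.card_eq_three.1 h
    obtain ⟨a, rfl⟩ := hlat (by simp : A ∈ ↑({A, B, C} : Finset _))
    obtain ⟨b, rfl⟩ := hlat (by simp : B ∈ ↑({coeR a, B, C} : Finset _))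
    obtain ⟨c, rfl⟩ := hlat (by simp : C ∈ ↑({coeR a, coeR b, C} : Finset _))
    have hD : orient a b c ≠ 0 := by
      intro h0
      have h₁ := collinear_iff_finrank_le_one.1
        (collinear_of_orient_eq_zero (C := coeR c) hAB (by simpa using h0))
      have h₂ := ht.finrank_vectorSpan (n := 2) (by simp [h])
      rw [Subtype.range_coe_subtype, Finset.setOfPred_mem, Finset.coe_insert,
        Finset.coe_pair] at h₂
      omega
    simp only [Finset.coe_insert, Finset.coe_singleton, Finset.mem_insert, Finset.mem_singleton,
      not_or] at hv hvt ⊢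
    exact isMidpointOrCentroid_triangle_of_orient_ne_zero hD hv (fun h => hvt.1 (by rw [h]))
      (fun h => hvt.2.1 (by rw [h])) (fun h => hvt.2.2 (by rw [h]))

theorem interior_lattice_point_is_midpoint_or_centroid_general
    (P : Set (Fin 2 → ℝ)) (V : Finset (Fin 2 → ℤ))
    (hP : P = convexHull ℝ ↑(V.image coeR))
    (v : Fin 2 → ℤ) (hv : coeR v ∈ interior P) :
    (∃ v₁ v₂ : Fin 2 → ℤ, coeR v₁ ∈ P ∧ coeR v₂ ∈ P ∧ v₁ ≠ v₂ ∧
        coeR v = (2⁻¹ : ℝ) • (coeR v₁ + coeR v₂)) ∨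
    (∃ v₁ v₂ v₃ : Fin 2 → ℤ, coeR v₁ ∈ P ∧ coeR v₂ ∈ P ∧ coeR v₃ ∈ P ∧
        v₁ ≠ v₂ ∧ v₁ ≠ v₃ ∧ v₂ ≠ v₃ ∧
        coeR v = (3⁻¹ : ℝ) • (coeR v₁ + coeR v₂ + coeR v₃)) := by
  subst hP
  have hv' := mem_convexHull_sdiff_singleton_of_mem_interior hv
  rw [convexHull_eq_union] at hv'
  obtain ⟨t, hts, ht, hvt⟩ := by simpa only [Set.mem_iUnion] using hv'
  have hlat : ↑t ⊆ Set.range coeR := fun X hX => by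
    obtain ⟨x, -, rfl⟩ := Finset.mem_image.1 (hts hX).1
    exact ⟨x, rfl⟩
  exact (isMidpointOrCentroid_of_affineIndependent ht hlat hvt fun h => (hts h).2 rfl).mono
    (convexHull_mono (hts.trans Set.sdiff_subset))

/-- every lattice point `v` in the interior of a lattice polygon `P` is
either the midpoint of two distinct lattice points of `P`, or the centroid of three
pairwise distinct lattice points of `P`. -/
theorem interior_lattice_point_is_midpoint_or_centroid
    (P : Set (Fin 2 → ℝ)) (V : Finset (Fin 2 → ℤ))
    (hP : P = convexHull ℝ ↑(V.image coeR))
    (hdim : affineSpan ℝ P = ⊤)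
    (v : Fin 2 → ℤ) (hv : coeR v ∈ interior P) :
    (∃ v₁ v₂ : Fin 2 → ℤ, coeR v₁ ∈ P ∧ coeR v₂ ∈ P ∧ v₁ ≠ v₂ ∧
        coeR v = (2⁻¹ : ℝ) • (coeR v₁ + coeR v₂)) ∨
    (∃ v₁ v₂ v₃ : Fin 2 → ℤ, coeR v₁ ∈ P ∧ coeR v₂ ∈ P ∧ coeR v₃ ∈ P ∧
        v₁ ≠ v₂ ∧ v₁ ≠ v₃ ∧ v₂ ≠ v₃ ∧
        coeR v = (3⁻¹ : ℝ) • (coeR v₁ + coeR v₂ + coeR v₃)) :=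
  interior_lattice_point_is_midpoint_or_centroid_general P V hP v hv
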